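/- arXiv:1805.01953 — 2 statements merged into one kernel-verified Lean document; each statement's English description precedes it below -/
import Mathlib

section
/- Let G be a minimally bad graph and O = [v_1,…,v_n] a bad connected order of G. Then for every vertex v ∈ V(G), the induced subgraphs G_{≤v}, G_{≥v}, G_{<v} and G_{>v} are connected (the empty graph being considered connected). In particular, G is connected. -/
open Classical in
noncomputable def greedyStep {V : Type*} (G : SimpleGraph V) (f : V → ℕ) (v : V) : V → ℕ :=
  fun u => if u = v then sInf {c : ℕ | 1 ≤ c ∧ ∀ w, G.Adj v w → f w ≠ c} else f u

noncomputable def greedyFrom {V : Type*} (G : SimpleGraph V) (f : V → ℕ) (l : List V) : V → ℕ :=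
  l.foldl (greedyStep G) f

noncomputable def greedy {V : Type*} (G : SimpleGraph V) (l : List V) : V → ℕ :=
  greedyFrom G (fun _ => 0) l

open Classical in
noncomputable def greedyStart2 {V : Type*} (G : SimpleGraph V) : List V → V → ℕ
  | [] => fun _ => 0
  | v :: rest => greedyFrom G (fun u => if u = v then 2 else 0) rest

noncomputable def chi {V : Type*} [Fintype V] (G : SimpleGraph V) : ℕ :=
  sInf {n : ℕ | G.Colorable n}

open Classical in
noncomputable def idx {V : Type*} (l : List V) (v : V) : ℕ := l.idxOf v

noncomputable def maxIdx {V : Type*} (l : List V) (A : Set V) : ℕ := sSup (idx l '' A)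
noncomputable def minIdx {V : Type*} (l : List V) (A : Set V) : ℕ := sInf (idx l '' A)

def IsConnOrder {V : Type*} (G : SimpleGraph V) (l : List V) : Prop :=
  l.Nodup ∧ (∀ v : V, v ∈ l) ∧
    ∀ i : Fin l.length, 0 < i.1 → ∃ j : Fin l.length, j.1 < i.1 ∧ G.Adj (l.get j) (l.get i)

def GoodOrder {V : Type*} [Fintype V] (G : SimpleGraph V) (l : List V) : Prop :=
  ∀ v : V, greedy G l v ≤ chi G

def Good {V : Type*} [Fintype V] (G : SimpleGraph V) : Prop :=
  ∀ s : Finset V, (G.induce (↑s : Set V)).Connected →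
    ∀ l : List ↥(↑s : Set V), IsConnOrder (G.induce (↑s : Set V)) l →
      GoodOrder (G.induce (↑s : Set V)) l

def BadOrder {V : Type*} [Fintype V] (G : SimpleGraph V) (l : List V) : Prop :=
  IsConnOrder G l ∧ ¬ GoodOrder G l

def MinimallyBad {V : Type*} [Fintype V] (G : SimpleGraph V) : Prop :=
  ¬ Good G ∧ ∀ s : Finset V, s ≠ Finset.univ →
    (G.induce (↑s : Set V)).Connected → Good (G.induce (↑s : Set V))

def IsInducedPath {V : Type*} (G : SimpleGraph V) (P : List V) : Prop :=
  P.Nodup ∧ ∀ i j : Fin P.length,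
    G.Adj (P.get i) (P.get j) ↔ (i.1 + 1 = j.1 ∨ j.1 + 1 = i.1)

def IsFlatPath {V : Type*} (G : SimpleGraph V) (P : List V) : Prop :=
  IsInducedPath G P ∧
    ∀ i : Fin P.length, 0 < i.1 → i.1 + 1 < P.length → (G.neighborSet (P.get i)).ncard = 2

def WellOrderedPath {V : Type*} (l P : List V) : Prop :=
  P.Pairwise (fun u v => idx l u < idx l v) ∨ P.Pairwise (fun u v => idx l v < idx l u)

def IsMaxFlatPath {V : Type*} (G : SimpleGraph V) (P : List V) : Prop :=
  IsFlatPath G P ∧ ∀ h : P ≠ [],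
    (G.neighborSet (P.head h)).ncard ≠ 2 ∧ (G.neighborSet (P.getLast h)).ncard ≠ 2

def ClawFree {V : Type*} (G : SimpleGraph V) : Prop :=
  ∀ a b c d : V, G.Adj a b → G.Adj a c → G.Adj a d → b ≠ c → b ≠ d → c ≠ d →
    G.Adj b c ∨ G.Adj b d ∨ G.Adj c d

def IsHole {V : Type*} (G : SimpleGraph V) (C : List V) : Prop :=
  4 ≤ C.length ∧ C.Nodup ∧
    ∀ i j : Fin C.length, G.Adj (C.get i) (C.get j) ↔
      ((i.1 + 1) % C.length = j.1 ∨ (j.1 + 1) % C.length = i.1)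

def GemFree {V : Type*} (G : SimpleGraph V) : Prop :=
  ¬ ∃ a b c d e : V, G.Adj a b ∧ G.Adj b c ∧ G.Adj c d ∧
    ¬ G.Adj a c ∧ ¬ G.Adj a d ∧ ¬ G.Adj b d ∧
    G.Adj e a ∧ G.Adj e b ∧ G.Adj e c ∧ G.Adj e d

/-!
Call a vertex set `S` earlier-closed if it contains every neighbour that precedes one of its
vertices in `O`. The order restricted to such an `S` is a connected order of `G[S]`, and greedy
colours `S` exactly as it does in `G`; so `G[S]` is connected, and when `S` is proper, minimality
makes these colours at most `χ(G[S]) ≤ χ(G)`. Prefixes of `O` are earlier-closed. If a suffix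
`G_{≥v}` were disconnected, the prefix before it together with the component containing the
badly coloured vertex (or any component, if that vertex lies in the prefix) would be a proper
earlier-closed set containing that vertex, a contradiction.
-/

section Order

variable {V : Type*} {G : SimpleGraph V} {l : List V}

lemma idx_lt_length {v : V} (hv : v ∈ l) : idx l v < l.length := by
  classical
  exact List.idxOf_lt_length_iff.2 hv

lemma get_idx {v : V} (h : idx l v < l.length) : l.get ⟨idx l v, h⟩ = v := by
  classical
  exact List.idxOf_get h

lemma idx_get (hl : l.Nodup) (i : Fin l.length) : idx l (l.get i) = i := by
  classical
  exact List.get_idxOf hl i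

lemma idx_inj {u v : V} (hu : u ∈ l) : idx l u = idx l v ↔ u = v := by
  classical
  exact List.idxOf_inj hu

lemma idx_lt_idx_of_mem_append_cons {q r : List V} {v w : V} (hl : (q ++ v :: r).Nodup)
    (hw : w ∈ q) : idx (q ++ v :: r) w < idx (q ++ v :: r) v := by
  classical
  have hv : v ∉ q := fun hv => List.disjoint_of_nodup_append hl hv List.mem_cons_self
  simp only [idx, List.idxOf_append_of_mem hw, List.idxOf_append_of_notMem hv,
    List.idxOf_cons_self, add_zero]
  exact List.idxOf_lt_length_iff.2 hw

lemma IsConnOrder.exists_adj_idx_lt (hl : IsConnOrder G l) {u : V} (hu : 0 < idx l u) :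
    ∃ w, G.Adj u w ∧ idx l w < idx l u := by
  have hlen := idx_lt_length (hl.2.1 u)
  obtain ⟨j, hj, hadj⟩ := hl.2.2 ⟨idx l u, hlen⟩ hu
  rw [get_idx hlen] at hadj
  exact ⟨l.get j, hadj.symm, by rwa [idx_get hl.1 j]⟩

lemma isConnOrder_of_exists_adj_idx_lt (hn : l.Nodup) (hall : ∀ v, v ∈ l)
    (h : ∀ u v, idx l v < idx l u → ∃ w, G.Adj u w ∧ idx l w < idx l u) :
    IsConnOrder G l := by
  refine ⟨hn, hall, fun i hi => ?_⟩
  obtain ⟨w, hadj, hw⟩ := h (l.get i) (l.get ⟨0, by omega⟩)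
    (by rw [idx_get hn, idx_get hn]; exact hi)
  have hlen := idx_lt_length (hall w)
  refine ⟨⟨idx l w, hlen⟩, by rwa [idx_get hn] at hw, ?_⟩
  rw [get_idx hlen]
  exact hadj.symm

def IsEarlierClosed (G : SimpleGraph V) (l : List V) (S : Set V) : Prop :=
  ∀ u ∈ S, ∀ w, G.Adj u w → idx l w < idx l u → w ∈ S

lemma IsConnOrder.preconnected_induce (hl : IsConnOrder G l) {S : Set V}
    (hS : IsEarlierClosed G l S) : (G.induce S).Preconnected := by
  have reach_first : ∀ n (u : V) (hu : u ∈ S), idx l u = n →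
      ∃ (z : V) (hz : z ∈ S), idx l z = 0 ∧ (G.induce S).Reachable ⟨u, hu⟩ ⟨z, hz⟩ := by
    intro n
    induction n using Nat.strong_induction_on with
    | _ n ih =>
      intro u hu hn
      rcases Nat.eq_zero_or_pos (idx l u) with h0 | hpos
      · exact ⟨u, hu, h0, .rfl⟩
      obtain ⟨w, hadj, hw⟩ := hl.exists_adj_idx_lt hpos
      have hwS := hS u hu w hadj hw
      obtain ⟨z, hz, hz0, hreach⟩ := ih _ (hn ▸ hw) w hwS rfl
      exact ⟨z, hz, hz0, (show (G.induce S).Adj ⟨u, hu⟩ ⟨w, hwS⟩ from hadj).reachable.trans hreach⟩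
  intro a b
  obtain ⟨z, hz, hz0, ha⟩ := reach_first _ a.1 a.2 rfl
  obtain ⟨z', hz', hz0', hb⟩ := reach_first _ b.1 b.2 rfl
  obtain rfl : z = z' := (idx_inj (hl.2.1 z)).1 (hz0.trans hz0'.symm)
  exact ha.trans hb.symm

lemma IsConnOrder.connected_induce (hl : IsConnOrder G l) {S : Set V}
    (hS : IsEarlierClosed G l S) (hne : S.Nonempty) : (G.induce S).Connected :=
  (SimpleGraph.connected_iff _).2 ⟨hl.preconnected_induce hS, hne.to_subtype⟩

lemma IsEarlierClosed.union_reachable {T : Set V} (hT : IsEarlierClosed G l Tᶜ) (x : T) :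
    IsEarlierClosed G l (Tᶜ ∪ {u | ∃ h : u ∈ T, (G.induce T).Reachable x ⟨u, h⟩}) := by
  rintro u (hu | ⟨huT, hxu⟩) w hadj hw
  · exact Or.inl (hT u hu w hadj hw)
  · by_cases hwT : w ∈ T
    · exact Or.inr ⟨hwT, hxu.trans (show (G.induce T).Adj ⟨u, huT⟩ ⟨w, hwT⟩ from hadj).reachable⟩
    · exact Or.inl hwT

end Order

section Restriction

variable {V : Type*} {G : SimpleGraph V} {l : List V} {S : Set V}

open Classical in
noncomputable def resList (S : Set V) (l : List V) : List S :=
  l.filterMap fun u => if h : u ∈ S then some ⟨u, h⟩ else none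

lemma mem_resList {x : S} : x ∈ resList S l ↔ x.1 ∈ l := by
  simp [resList]

lemma resList_append (p q : List V) : resList S (p ++ q) = resList S p ++ resList S q :=
  List.filterMap_append

lemma resList_singleton_of_mem {v : V} (hv : v ∈ S) : resList S [v] = [⟨v, hv⟩] := by
  simp [resList, hv]

lemma resList_singleton_of_notMem {v : V} (hv : v ∉ S) : resList S [v] = [] := by
  simp [resList, hv]

lemma nodup_resList (hl : l.Nodup) : (resList S l).Nodup := by
  refine hl.filterMap fun a a' b hb hb' => ?_
  split_ifs at hb hb' <;> simp_all
  exact congrArg Subtype.val (hb.trans hb'.symm)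

lemma pairwise_resList (hl : l.Nodup) :
    (resList S l).Pairwise fun x y => idx l x.1 < idx l y.1 := by
  have hp : l.Pairwise fun a b => idx l a < idx l b :=
    List.pairwise_iff_get.2 fun i j hij => by rw [idx_get hl, idx_get hl]; exact hij
  refine hp.filterMap _ fun a a' hR b hb b' hb' => ?_
  split_ifs at hb hb'
  simp_all
  subst_vars
  exact hR

lemma idx_resList_lt_iff (hl : l.Nodup) {x y : S} (hx : x.1 ∈ l) (hy : y.1 ∈ l) :
    idx (resList S l) x < idx (resList S l) y ↔ idx l x < idx l y := by
  have hx' := idx_lt_length (mem_resList.2 hx)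
  have hy' := idx_lt_length (mem_resList.2 hy)
  have forward : ∀ {x y : S} (hx : idx (resList S l) x < (resList S l).length)
      (hy : idx (resList S l) y < (resList S l).length),
      idx (resList S l) x < idx (resList S l) y → idx l x < idx l y := by
    intro x y hx hy hxy
    have := List.pairwise_iff_get.1 (pairwise_resList hl) ⟨_, hx⟩ ⟨_, hy⟩ hxy
    rwa [get_idx, get_idx] at this
  refine ⟨forward hx' hy', fun h => ?_⟩
  rcases lt_trichotomy (idx (resList S l) x) (idx (resList S l) y) with hlt | heq | hgt
  · exact hlt
  · rw [(idx_inj (mem_resList.2 hx)).1 heq] at h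
    exact absurd h (lt_irrefl _)
  · exact absurd (forward hy' hx' hgt) h.asymm

lemma IsConnOrder.resList (hl : IsConnOrder G l) (hS : IsEarlierClosed G l S) :
    IsConnOrder (G.induce S) (resList S l) := by
  have hmem : ∀ x : S, x.1 ∈ l := fun x => hl.2.1 x
  refine isConnOrder_of_exists_adj_idx_lt (nodup_resList hl.1)
    (fun x => mem_resList.2 (hmem x)) fun x y hyx => ?_
  rw [idx_resList_lt_iff hl.1 (hmem y) (hmem x)] at hyx
  obtain ⟨w, hadj, hw⟩ := hl.exists_adj_idx_lt (Nat.zero_lt_of_lt hyx)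
  have hwS := hS x x.2 w hadj hw
  exact ⟨⟨w, hwS⟩, hadj, (idx_resList_lt_iff hl.1 (hl.2.1 w) (hmem x)).2 hw⟩

end Restriction

section Greedy

variable {V : Type*} {G : SimpleGraph V}

lemma greedyStep_of_ne (f : V → ℕ) {u v : V} (h : u ≠ v) : greedyStep G f v u = f u := by
  simp [greedyStep, h]

lemma greedyFrom_append_singleton (f : V → ℕ) (p : List V) (v : V) :
    greedyFrom G f (p ++ [v]) = greedyStep G (greedyFrom G f p) v := by
  simp [greedyFrom]

lemma greedyFrom_of_notMem (f : V → ℕ) {p : List V} {u : V} (hu : u ∉ p) :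
    greedyFrom G f p u = f u := by
  induction p using List.reverseRecOn with
  | nil => rfl
  | append_singleton p v ih =>
    simp only [List.mem_append, List.mem_singleton, not_or] at hu
    rw [greedyFrom_append_singleton, greedyStep_of_ne _ hu.2, ih hu.1]

lemma greedyStep_induce {S : Set V} (f : V → ℕ) {v : V} (hv : v ∈ S)
    (hout : ∀ w ∉ S, G.Adj v w → f w = 0) (x : S) :
    greedyStep (G.induce S) (fun y => f y) ⟨v, hv⟩ x = greedyStep G f v x := by
  by_cases hx : x.1 = v
  · obtain rfl : x = ⟨v, hv⟩ := Subtype.ext hx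
    simp only [greedyStep, if_true]
    congr 1
    ext c
    simp only [Set.mem_ofPred_eq, SimpleGraph.comap_adj, Function.Embedding.subtype_apply,
      Subtype.forall, and_congr_right_iff]
    refine fun hc => ⟨fun h w hadj => ?_, fun h w _ hadj => h w hadj⟩
    by_cases hw : w ∈ S
    · exact h w hw hadj
    · rw [hout w hw hadj]
      omega
  · rw [greedyStep_of_ne _ hx, greedyStep_of_ne _ (fun h => hx (congrArg Subtype.val h))]

/-- A vertex of `S` only sees its earlier neighbours, and those lie in `S`. -/
lemma greedy_resList {l : List V} {S : Set V} (hl : l.Nodup) (hS : IsEarlierClosed G l S) :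
    greedy (G.induce S) (resList S l) = fun x : S => greedy G l x := by
  suffices ∀ p, p <+: l → greedy (G.induce S) (resList S p) = fun x : S => greedy G p x from
    this l (List.prefix_refl l)
  intro p hp
  induction p using List.reverseRecOn with
  | nil => rfl
  | append_singleton q v ih =>
    obtain ⟨r, rfl⟩ := hp
    have ih := ih ⟨[v] ++ r, (List.append_assoc _ _ _).symm⟩
    rw [List.append_assoc, List.singleton_append] at hl hS
    funext x
    simp only [greedy] at ih ⊢
    rw [resList_append, greedyFrom_append_singleton]
    by_cases hv : v ∈ S
    · rw [resList_singleton_of_mem hv, greedyFrom_append_singleton, ih]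
      refine greedyStep_induce (greedyFrom G (fun _ => 0) q) hv
        (fun w hw hadj => greedyFrom_of_notMem _ fun hwq => ?_) x
      exact hw (hS v hv w hadj (idx_lt_idx_of_mem_append_cons hl hwq))
    · rw [resList_singleton_of_notMem hv, List.append_nil, ih,
        greedyStep_of_ne _ fun h : x.1 = v => hv (h ▸ x.2)]

end Greedy

lemma chi_le_of_hom {V W : Type*} [Fintype V] [Fintype W] {G : SimpleGraph V}
    {H : SimpleGraph W} (f : H →g G) : chi H ≤ chi G :=
  Nat.sInf_le ((Nat.sInf_mem (⟨_, G.colorable_of_fintype⟩ : {n | G.Colorable n}.Nonempty)).of_hom f)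

section MinimallyBad

variable {V : Type*} [Fintype V] {G : SimpleGraph V} {l : List V}

lemma MinimallyBad.greedy_le_chi (hmin : MinimallyBad G) (hl : IsConnOrder G l) {S : Set V}
    (hS : IsEarlierClosed G l S) (hSV : S ≠ Set.univ) {u : V} (hu : u ∈ S) :
    greedy G l u ≤ chi G := by
  obtain ⟨s, rfl⟩ : ∃ s : Finset V, ↑s = S := ⟨_, (Set.toFinite S).coe_toFinset⟩
  have hs : s ≠ Finset.univ := by rintro rfl; exact hSV Finset.coe_univ
  set H := G.induce (s : Set V)
  have hlH : IsConnOrder H (resList s l) := hl.resList hS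
  -- `Good H` speaks only of induced subgraphs of `H`, so restrict once more, to all of `s`.
  have hunivH : IsEarlierClosed H (resList s l) ↑(Finset.univ : Finset s) :=
    fun _ _ w _ _ => Finset.mem_coe.2 (Finset.mem_univ w)
  have hgood := hmin.2 s hs (hl.connected_induce hS ⟨u, hu⟩) Finset.univ
    (hlH.connected_induce hunivH ⟨⟨u, hu⟩, by simp⟩) _ (hlH.resList hunivH)
    ⟨⟨u, hu⟩, by simp⟩
  rw [greedy_resList hlH.1 hunivH, greedy_resList hl.1 hS] at hgood
  calc greedy G l u ≤ chi (H.induce ↑(Finset.univ : Finset s)) := hgood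
    _ ≤ chi H := chi_le_of_hom (SimpleGraph.Embedding.induce _).toHom
    _ ≤ chi G := chi_le_of_hom (SimpleGraph.Embedding.induce _).toHom

/-- If `t` lies in `Tᶜ` or in the component of `x`, their union is earlier-closed and contains a
badly coloured vertex, so by minimality it is all of `V`. -/
lemma MinimallyBad.preconnected_induce (hmin : MinimallyBad G) (hl : IsConnOrder G l) {t : V}
    (ht : chi G < greedy G l t) {T : Set V} (hT : IsEarlierClosed G l Tᶜ) :
    (G.induce T).Preconnected := by
  set S := fun x : T => Tᶜ ∪ {u | ∃ h : u ∈ T, (G.induce T).Reachable x ⟨u, h⟩}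
  have reach_all : ∀ x : T, t ∈ S x → ∀ y : T, (G.induce T).Reachable x y := by
    intro x htx y
    by_contra hxy
    refine (hmin.greedy_le_chi hl (hT.union_reachable x) (fun h => ?_) htx).not_gt ht
    rcases Set.eq_univ_iff_forall.1 h y.1 with hy | ⟨_, hxy'⟩
    · exact hy y.2
    · exact hxy hxy'
  intro a b
  by_cases hta : t ∈ S a
  · exact reach_all a hta b
  · have htT : t ∈ T := by_contra fun h => hta (Or.inl h)
    have hta' := reach_all ⟨t, htT⟩ (Or.inr ⟨htT, .rfl⟩) a
    exact absurd (Or.inr ⟨htT, hta'.symm⟩) hta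

end MinimallyBad

theorem stmt5 {V : Type*} [Fintype V] (G : SimpleGraph V) (l : List V)
    (hmin : MinimallyBad G) (hbad : BadOrder G l) :
    (∀ v : V,
      (G.induce {u : V | idx l u ≤ idx l v}).Connected ∧
      (G.induce {u : V | idx l v ≤ idx l u}).Connected ∧
      (G.induce {u : V | idx l u < idx l v}).Preconnected ∧
      (G.induce {u : V | idx l v < idx l u}).Preconnected) ∧
    G.Connected := by
  obtain ⟨hl, hng⟩ := hbad
  obtain ⟨t, ht⟩ : ∃ t, chi G < greedy G l t := by simpa [GoodOrder] using hng
  have hsuffix : ∀ k, (G.induce {u | k ≤ idx l u}).Preconnected := fun k =>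
    hmin.preconnected_induce hl ht fun u hu w _ hw hk => hu (hk.trans hw.le)
  refine ⟨fun v => ⟨?_, ?_, ?_, hsuffix (idx l v + 1)⟩, ?_⟩
  · exact hl.connected_induce (fun u hu w _ hw => hw.le.trans hu) ⟨v, le_refl (idx l v)⟩
  · exact (SimpleGraph.connected_iff _).2 ⟨hsuffix _, ⟨⟨v, le_refl (idx l v)⟩⟩⟩
  · exact hl.preconnected_induce fun u hu w _ hw => hw.trans hu
  · exact (SimpleGraph.induceUnivIso G).connected_iff.1
      (hl.connected_induce (fun _ _ _ _ _ => trivial) ⟨t, trivial⟩)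
end

section
/- Let G be a minimally bad graph and O = [v_1,…,v_n] a bad connected order of G. If S is a cutset of G, then for every connected component C of G∖S except at most one, max(C) < max(S); furthermore, if C is the unique component with max(C) > max(S), then v_n ∈ C. -/
section Order
open Classical
variable {V : Type*} {G : SimpleGraph V} {l : List V}

lemma pairwise_of_idx_lt (hl : l.Nodup) {R : V → V → Prop}
    (h : ∀ a b, idx l a < idx l b → R a b) : l.Pairwise R := by
  refine List.pairwise_iff_getElem.mpr fun i j hi hj hij => h _ _ ?_
  rwa [idx, idx, hl.idxOf_getElem, hl.idxOf_getElem]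

lemma idx_le_idx_of_getLast? (hl : l.Nodup) {vn : V} (hvn : l.getLast? = some vn) {x : V}
    (hx : x ∈ l) : idx l x ≤ idx l vn := by
  obtain ⟨ys, rfl⟩ := List.getLast?_eq_some_iff.mp hvn
  have hvn_ys : vn ∉ ys := fun h => (List.nodup_append.mp hl).2.2 vn h vn (by simp) rfl
  have hx_lt : idx (ys ++ [vn]) x < ys.length + 1 := by
    simpa [idx] using List.idxOf_lt_length_iff.mpr hx
  have hvn_idx : idx (ys ++ [vn]) vn = ys.length := by
    simp [idx, List.idxOf_append_of_notMem hvn_ys]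
  omega

lemma idx_le_maxIdx (A : Set V) {x : V} (hx : x ∈ A) : idx l x ≤ maxIdx l A :=
  le_csSup ⟨l.length, by rintro _ ⟨y, -, rfl⟩; exact List.idxOf_le_length⟩ ⟨x, hx, rfl⟩

lemma exists_idx_eq_maxIdx {A : Set V} (hA : A.Nonempty) : ∃ z ∈ A, idx l z = maxIdx l A :=
  Nat.sSup_mem (hA.image _) ⟨l.length, by rintro _ ⟨y, -, rfl⟩; exact List.idxOf_le_length⟩

lemma isConnOrder_iff_append : IsConnOrder G l ↔ l.Nodup ∧ (∀ v, v ∈ l) ∧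
    ∀ pre x suf, l = pre ++ x :: suf → pre ≠ [] → ∃ y ∈ pre, G.Adj y x := by
  refine and_congr_right fun _ => and_congr_right fun _ => ⟨fun h pre x suf hl hpre => ?_, ?_⟩
  · subst hl
    obtain ⟨j, hj, hadj⟩ := h ⟨pre.length, by simp⟩ (List.length_pos_iff.mpr hpre)
    refine ⟨pre[j.1], List.getElem_mem _, ?_⟩
    simpa [List.getElem_append_left hj] using hadj
  · intro h i hi
    have hsplit : l = l.take i ++ l[i.1] :: l.drop (i + 1) := by
      rw [← List.drop_eq_getElem_cons, List.take_append_drop]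
    have hpre : l.take i ≠ [] := List.ne_nil_of_length_pos (by simp; omega)
    obtain ⟨y, hy, hadj⟩ := h _ _ _ hsplit hpre
    obtain ⟨j, hj, rfl⟩ := List.mem_take_iff_getElem.mp hy
    exact ⟨⟨j, by omega⟩, by simp; omega, hadj⟩

lemma IsConnOrder.reachable (h : IsConnOrder G l) (h0 : 0 < l.length) :
    ∀ i (hi : i < l.length), G.Reachable l[0] l[i] := by
  intro i
  induction i using Nat.strong_induction_on with
  | _ i ih =>
    intro hi
    rcases Nat.eq_zero_or_pos i with rfl | hpos
    · rfl
    obtain ⟨j, hj, hadj⟩ := h.2.2 ⟨i, hi⟩ hpos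
    exact (ih j hj j.2).trans hadj.reachable

lemma IsConnOrder.preconnected (h : IsConnOrder G l) : G.Preconnected := by
  intro u w
  have h0 : 0 < l.length := List.length_pos_of_mem (h.2.1 u)
  obtain ⟨i, hi, rfl⟩ := List.getElem_of_mem (h.2.1 u)
  obtain ⟨j, hj, rfl⟩ := List.getElem_of_mem (h.2.1 w)
  exact (h.reachable h0 i hi).symm.trans (h.reachable h0 j hj)

end Order

open Classical in
noncomputable def restrictOrder {V : Type*} (l : List V) (s : Set V) : List s :=
  l.filterMap fun x => if h : x ∈ s then some ⟨x, h⟩ else none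

section Restrict
variable {V : Type*} {G : SimpleGraph V} {s : Set V}

lemma restrictOrder_cons_of_mem {x : V} (hx : x ∈ s) (l : List V) :
    restrictOrder (x :: l) s = ⟨x, hx⟩ :: restrictOrder l s := by
  simp [restrictOrder, hx]

lemma restrictOrder_cons_of_notMem {x : V} (hx : x ∉ s) (l : List V) :
    restrictOrder (x :: l) s = restrictOrder l s := by
  simp [restrictOrder, hx]

lemma mem_restrictOrder {l : List V} {a : s} : a ∈ restrictOrder l s ↔ a.1 ∈ l := by
  simp [restrictOrder]

lemma restrictOrder_isConnOrder {l : List V} (hl : IsConnOrder G l)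
    (hpw : l.Pairwise fun a b => a ∉ s → b ∈ s → ¬G.Adj a b) :
    IsConnOrder (G.induce s) (restrictOrder l s) := by
  obtain ⟨hnd, hmem, hconn⟩ := isConnOrder_iff_append.mp hl
  refine isConnOrder_iff_append.mpr ⟨hnd.filterMap ?_, fun a => mem_restrictOrder.mpr (hmem a),
    fun pre x suf hsplit hpre => ?_⟩
  · intro a a' b ha ha'
    simp only [Option.mem_def] at ha ha'
    split_ifs at ha ha'
    exact congrArg Subtype.val ((Option.some.inj ha).trans (Option.some.inj ha').symm)
  obtain ⟨l₁, l₂, rfl, rfl, h₂⟩ := List.filterMap_eq_append_iff.mp hsplit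
  obtain ⟨l₃, y, l₄, rfl, h₃, hy, -⟩ := List.filterMap_eq_cons_iff.mp h₂
  have hys : y = x.1 := by
    split_ifs at hy
    exact congrArg Subtype.val (Option.some.inj hy)
  subst hys
  have hpre' : l₁ ++ l₃ ≠ [] := by rintro hnil; simp_all [restrictOrder]
  obtain ⟨z, hz, hadj⟩ := hconn (l₁ ++ l₃) x.1 l₄ (by simp) hpre'
  have hzs : z ∈ s := by
    by_contra hzs
    rw [← List.append_assoc, List.pairwise_append] at hpw
    exact hpw.2.2 z hz x.1 List.mem_cons_self hzs x.2 hadj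
  have hz₃ : z ∉ l₃ := fun hz₃ => by simpa [hzs] using h₃ z hz₃
  refine ⟨⟨z, hzs⟩, mem_restrictOrder.mpr ?_, hadj⟩
  simpa [hz₃] using hz

end Restrict

section Greedy
variable {V : Type*} {G : SimpleGraph V} {s : Set V}

lemma greedyStep_induce_s6 (f : V → ℕ) (f' : s → ℕ) (hf : ∀ b : s, f' b = f b) (a : s)
    (hzero : ∀ b ∉ s, G.Adj a b → f b = 0) (b : s) :
    greedyStep (G.induce s) f' a b = greedyStep G f a b := by
  unfold greedyStep
  by_cases hba : b = a
  · subst hba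
    rw [if_pos rfl, if_pos rfl]
    congr 1
    ext c
    refine and_congr_right fun hc => ⟨fun h w hadj => ?_, fun h w hadj => ?_⟩
    · by_cases hw : w ∈ s
      · simpa [hf] using h ⟨w, hw⟩ hadj
      · rw [hzero w hw hadj]; omega
    · simpa [hf] using h w hadj
  · rw [if_neg hba, if_neg (fun h => hba (Subtype.ext h)), hf]

-- The last hypothesis is the invariant: a coloured vertex outside `s` has no neighbour in `s`
-- still to be coloured, so it never blocks a colour of a vertex of `s`.
lemma greedyFrom_restrictOrder : ∀ (m : List V) (f : V → ℕ) (f' : s → ℕ),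
    m.Pairwise (fun a b => a ∉ s → b ∈ s → ¬G.Adj a b) → (∀ b : s, f' b = f b) →
    (∀ b ∉ s, f b ≠ 0 → ∀ a ∈ m, a ∈ s → ¬G.Adj a b) →
    ∀ b : s, greedyFrom (G.induce s) f' (restrictOrder m s) b = greedyFrom G f m b
  | [], _, _, _, hf, _, b => hf b
  | x :: m, f, f', hpw, hf, hcol, b => by
    obtain ⟨hx_pw, hpw⟩ := List.pairwise_cons.mp hpw
    have hcol' : ∀ c ∉ s, greedyStep G f x c ≠ 0 → ∀ a ∈ m, a ∈ s → ¬G.Adj a c := by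
      intro c hc hfc a ha has hadj
      by_cases hcx : c = x
      · subst hcx
        exact hx_pw a ha hc has hadj.symm
      · rw [greedyStep, if_neg hcx] at hfc
        exact hcol c hc hfc a (List.mem_cons_of_mem x ha) has hadj
    by_cases hx : x ∈ s
    · rw [restrictOrder_cons_of_mem hx]
      refine greedyFrom_restrictOrder m (greedyStep G f x) _ hpw
        (greedyStep_induce_s6 f f' hf ⟨x, hx⟩ fun c hc hadj => ?_) hcol' b
      by_contra hfc
      exact hcol c hc hfc x List.mem_cons_self hx hadj
    · rw [restrictOrder_cons_of_notMem hx]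
      refine greedyFrom_restrictOrder m (greedyStep G f x) f' hpw (fun c => ?_) hcol' b
      rw [greedyStep, if_neg (fun h : c.1 = x => hx (h ▸ c.2)), hf]

lemma greedy_restrictOrder {l : List V}
    (hpw : l.Pairwise fun a b => a ∉ s → b ∈ s → ¬G.Adj a b) (b : s) :
    greedy (G.induce s) (restrictOrder l s) b = greedy G l b :=
  greedyFrom_restrictOrder l _ _ hpw (fun _ => rfl) (fun _ _ h => absurd rfl h) b

end Greedy

section Good
variable {V W : Type*} [Fintype V] [Fintype W]

lemma chi_colorable (G : SimpleGraph V) : G.Colorable (chi G) :=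
  Nat.sInf_mem (s := {n | G.Colorable n}) ⟨Fintype.card V, G.colorable_of_fintype⟩

lemma chi_le_of_embedding {G : SimpleGraph V} {H : SimpleGraph W} (f : G ↪g H) :
    chi G ≤ chi H :=
  Nat.sInf_le ((chi_colorable H).of_hom f.toHom)

lemma greedy_le_chi_of_goodOrder_restrictOrder {G : SimpleGraph V} {l : List V} {s : Finset V}
    (hpw : l.Pairwise fun a b => a ∉ s → b ∈ s → ¬G.Adj a b)
    (hgood : GoodOrder (G.induce s) (restrictOrder l s)) {v : V} (hv : v ∈ s) :
    greedy G l v ≤ chi G :=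
  calc greedy G l v = greedy (G.induce s) (restrictOrder l s) ⟨v, hv⟩ :=
        (greedy_restrictOrder hpw ⟨v, hv⟩).symm
    _ ≤ chi (G.induce s) := hgood _
    _ ≤ chi G := chi_le_of_embedding (SimpleGraph.Embedding.induce _)

lemma Good.goodOrder {G : SimpleGraph V} (hG : Good G) {l : List V} (hl : IsConnOrder G l) :
    GoodOrder G l := by
  intro v
  have hpw : l.Pairwise fun a b => a ∉ (Finset.univ : Finset V) → b ∈ (Finset.univ : Finset V) →
      ¬G.Adj a b :=
    List.pairwise_of_forall fun a _ ha => absurd (Finset.mem_univ a) ha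
  have hl' := restrictOrder_isConnOrder (s := (Finset.univ : Finset V)) hl hpw
  have : Nonempty (Finset.univ : Finset V) := ⟨⟨v, Finset.mem_univ v⟩⟩
  exact greedy_le_chi_of_goodOrder_restrictOrder hpw (hG _ ⟨hl'.preconnected⟩ _ hl')
    (Finset.mem_univ v)

lemma MinimallyBad.greedy_le_chi_s6 {G : SimpleGraph V} (hG : MinimallyBad G) {l : List V}
    (hl : IsConnOrder G l) {s : Finset V} (hs : s ≠ Finset.univ)
    (hpw : l.Pairwise fun a b => a ∉ s → b ∈ s → ¬G.Adj a b) {v : V} (hv : v ∈ s) :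
    greedy G l v ≤ chi G := by
  have hl' := restrictOrder_isConnOrder hl hpw
  have : Nonempty s := ⟨⟨v, hv⟩⟩
  exact greedy_le_chi_of_goodOrder_restrictOrder hpw
    ((hG.2 s hs ⟨hl'.preconnected⟩).goodOrder hl') hv

end Good

section Cut
variable {V : Type*} {G : SimpleGraph V} {l : List V}

lemma mem_supp_of_adj {S : Set V} {c : (G.induce Sᶜ).ConnectedComponent} {a b : V}
    (ha : a ∈ Subtype.val '' c.supp) (hab : G.Adj a b) (hb : b ∉ S) :
    b ∈ Subtype.val '' c.supp := by
  obtain ⟨a', ha', rfl⟩ := ha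
  refine ⟨⟨b, hb⟩, ?_, rfl⟩
  rw [SimpleGraph.ConnectedComponent.mem_supp_iff] at ha' ⊢
  rw [← ha']
  exact SimpleGraph.ConnectedComponent.sound
    (show (G.induce Sᶜ).Adj ⟨b, hb⟩ a' from hab.symm).reachable

lemma maxIdx_lt_maxIdx_supp (hl : ∀ v, v ∈ l) {S : Set V} (hS : S.Nonempty)
    (c : (G.induce Sᶜ).ConnectedComponent) (h : maxIdx l S ≤ maxIdx l (Subtype.val '' c.supp)) :
    maxIdx l S < maxIdx l (Subtype.val '' c.supp) := by
  refine h.lt_of_ne fun heq => ?_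
  obtain ⟨x, hxS, hx⟩ := exists_idx_eq_maxIdx (l := l) hS
  obtain ⟨_, ⟨y, -, rfl⟩, hy⟩ := exists_idx_eq_maxIdx (l := l) (c.nonempty_supp.image Subtype.val)
  have hxy : x = y.1 := by
    classical
    exact (List.idxOf_inj (hl x)).mp (hx.trans (heq.trans hy.symm))
  exact y.2 (hxy ▸ hxS)

variable [Fintype V]

lemma MinimallyBad.greedy_le_chi_of_closed (hG : MinimallyBad G) (hl : IsConnOrder G l)
    (S U : Set V) (hU : ∀ a b, a ∈ U → G.Adj a b → b ∉ S → b ∈ U) {z : V} (hzU : z ∈ U)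
    (hz : maxIdx l S < idx l z) {v : V} (hv : v ∈ U → idx l v ≤ maxIdx l S) :
    greedy G l v ≤ chi G := by
  classical
  set t := maxIdx l S
  let s : Finset V := Finset.univ.filter fun x => x ∈ U → idx l x ≤ t
  have hmem : ∀ x, x ∈ s ↔ (x ∈ U → idx l x ≤ t) := by simp [s]
  refine hG.greedy_le_chi_s6 hl (s := s) (fun h => ?_)
    (pairwise_of_idx_lt hl.1 fun a b hab ha hb hadj => ?_) ((hmem v).mpr hv)
  · have := (hmem z).mp (h ▸ Finset.mem_univ z) hzU
    omega
  · obtain ⟨haU, hat⟩ := Classical.not_imp.mp (mt (hmem a).mpr ha)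
    have : idx l b ≤ t := by
      by_cases hbS : b ∈ S
      · exact idx_le_maxIdx S hbS
      · exact (hmem b).mp hb (hU a b haU hadj hbS)
    omega

lemma MinimallyBad.getLast_mem_of_maxIdx_lt (hG : MinimallyBad G) (hbad : BadOrder G l)
    {vn : V} (hvn : l.getLast? = some vn) {S : Set V} (c : (G.induce Sᶜ).ConnectedComponent)
    (hc : maxIdx l S < maxIdx l (Subtype.val '' c.supp)) : vn ∈ Subtype.val '' c.supp := by
  obtain ⟨v, hv⟩ : ∃ v, chi G < greedy G l v := by simpa [GoodOrder] using hbad.2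
  obtain ⟨z, hzC, hz⟩ := exists_idx_eq_maxIdx (l := l) (c.nonempty_supp.image Subtype.val)
  have hzvn := idx_le_idx_of_getLast? hbad.1.1 hvn (hbad.1.2.1 z)
  by_contra hvnC
  by_cases hvC : v ∈ Subtype.val '' c.supp ∧ maxIdx l S < idx l v
  · have hvnS : vn ∉ S := fun h => by have := idx_le_maxIdx (l := l) S h; omega
    refine (hG.greedy_le_chi_of_closed hbad.1 S {x | x ∉ Subtype.val '' c.supp ∧ x ∉ S}
      (fun a b ha hadj hbS => ⟨fun hbC => ha.1 (mem_supp_of_adj hbC hadj.symm ha.2), hbS⟩)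
      (z := vn) ⟨hvnC, hvnS⟩ (by omega) (fun h => absurd hvC.1 h.1)).not_gt hv
  · refine (hG.greedy_le_chi_of_closed hbad.1 S _ (fun a b ha hadj hb => mem_supp_of_adj ha hadj hb)
      hzC (hz ▸ hc) (fun h => not_lt.mp fun h' => hvC ⟨h, h'⟩)).not_gt hv

end Cut

theorem stmt6_general {V : Type*} [Fintype V] (G : SimpleGraph V) (l : List V)
    (hmin : MinimallyBad G) (hbad : BadOrder G l)
    (vn : V) (hvn : l.getLast? = some vn)
    (S : Finset V) :
    (∀ c₁ c₂ : (G.induce ((↑S : Set V)ᶜ)).ConnectedComponent, c₁ ≠ c₂ →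
      maxIdx l (Subtype.val '' c₁.supp) < maxIdx l (↑S : Set V) ∨
      maxIdx l (Subtype.val '' c₂.supp) < maxIdx l (↑S : Set V)) ∧
    (∀ c : (G.induce ((↑S : Set V)ᶜ)).ConnectedComponent,
      maxIdx l (↑S : Set V) < maxIdx l (Subtype.val '' c.supp) →
      vn ∈ Subtype.val '' c.supp) := by
  have hlast := fun c => hmin.getLast_mem_of_maxIdx_lt hbad hvn (S := ↑S) c
  refine ⟨fun c₁ c₂ hne => ?_, hlast⟩
  by_contra! h
  rcases S.eq_empty_or_nonempty with rfl | hS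
  · have hpre : (G.induce ((↑(∅ : Finset V) : Set V)ᶜ)).Preconnected := by
      rw [Finset.coe_empty, Set.compl_empty]
      exact G.induceUnivIso.preconnected_iff.mpr hbad.1.preconnected
    exact hne (hpre.subsingleton_connectedComponent.elim c₁ c₂)
  · have hS' : (↑S : Set V).Nonempty := hS
    obtain ⟨x₁, hx₁, rfl⟩ := hlast c₁ (maxIdx_lt_maxIdx_supp hbad.1.2.1 hS' c₁ h.1)
    obtain ⟨x₂, hx₂, hx⟩ := hlast c₂ (maxIdx_lt_maxIdx_supp hbad.1.2.1 hS' c₂ h.2)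
    rw [SimpleGraph.ConnectedComponent.mem_supp_iff] at hx₁ hx₂
    exact hne (by rw [← hx₁, ← hx₂, Subtype.ext hx])

theorem stmt6 {V : Type*} [Fintype V] (G : SimpleGraph V) (l : List V)
    (hmin : MinimallyBad G) (hbad : BadOrder G l)
    (vn : V) (hvn : l.getLast? = some vn)
    (S : Finset V) (hcut : ¬ (G.induce ((↑S : Set V)ᶜ)).Preconnected) :
    (∀ c₁ c₂ : (G.induce ((↑S : Set V)ᶜ)).ConnectedComponent, c₁ ≠ c₂ →
      maxIdx l (Subtype.val '' c₁.supp) < maxIdx l (↑S : Set V) ∨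
      maxIdx l (Subtype.val '' c₂.supp) < maxIdx l (↑S : Set V)) ∧
    (∀ c : (G.induce ((↑S : Set V)ᶜ)).ConnectedComponent,
      maxIdx l (↑S : Set V) < maxIdx l (Subtype.val '' c.supp) →
      vn ∈ Subtype.val '' c.supp) :=
  stmt6_general G l hmin hbad vn hvn S
end
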